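/- In the classical (commutative) case, define matrices over the coordinate ring of the 2n-sphere {(a_1,...,a_n,t) ∈ ℂⁿ×ℝ : Σ|a_i|² = t(1-t)} by G_0 = 1-t and G_{2(k+1)} = [[G_{2k}, a_{k+1}*],[a_{k+1}, 1-G_{2k}]]. Then G_{2n} := G^{2n}_{2n} is an idempotent, G_{2n}² = G_{2n}, and for n ≥ 1 its matrix trace is constant, Tr(G_{2n}) = 2^{n-1} (indeed Tr(G_{2(k+1)}) = 2^k); equivalently, (G_{2k})² - G_{2k} = (Σ_{i=1}^k |a_i|² - t(1-t))·I for each k, which vanishes for k = n. -/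
import Mathlib


open Matrix

/-- Identification `Fin 2^k ⊕ Fin 2^k ≃ Fin 2^{k+1}` used for block matrices. -/
def powEquiv (k : ℕ) : Fin (2 ^ k) ⊕ Fin (2 ^ k) ≃ Fin (2 ^ (k + 1)) :=
  finSumFinEquiv.trans (finCongr (by rw [pow_succ, mul_two]))

/-- The classical recursion `G_0 = 1 - t`,
`G_{2(k+1)} = [[G_{2k}, a_{k+1}*], [a_{k+1}, 1 - G_{2k}]]` (0-indexed step uses `a k`). -/
noncomputable def gMat {R : Type*} [CommRing R] [StarRing R] (t : R) (a : ℕ → R) :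
    (k : ℕ) → Matrix (Fin (2 ^ k)) (Fin (2 ^ k)) R
  | 0 => (1 - t) • 1
  | k + 1 =>
    Matrix.reindex (powEquiv k) (powEquiv k)
      (Matrix.fromBlocks (gMat t a k) (star (a k) • 1) (a k • 1) (1 - gMat t a k))

theorem trace_submatrix_equiv' {R : Type*} [AddCommMonoid R] {m n : Type*} [Fintype m]
    [Fintype n] (M : Matrix n n R) (e : m ≃ n) :
    Matrix.trace (M.submatrix e e) = Matrix.trace M := by
  simp only [Matrix.trace, Matrix.diag, Matrix.submatrix_apply]
  exact e.sum_comp fun j => M j j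

theorem trace_fromBlocks' {R : Type*} [AddCommMonoid R] {m n : Type*} [Fintype m] [Fintype n]
    (A : Matrix m m R) (B : Matrix m n R) (C : Matrix n m R) (D : Matrix n n R) :
    Matrix.trace (Matrix.fromBlocks A B C D) = Matrix.trace A + Matrix.trace D := by
  simp [Matrix.trace, Matrix.diag, Fintype.sum_sum_type, Matrix.fromBlocks]

theorem fromBlocks_sub' {R : Type*} [AddCommGroup R] {l m : Type*}
    (A A' : Matrix l l R) (B B' : Matrix l m R) (C C' : Matrix m l R) (D D' : Matrix m m R) :
    Matrix.fromBlocks A B C D - Matrix.fromBlocks A' B' C' D'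
      = Matrix.fromBlocks (A - A') (B - B') (C - C') (D - D') := by
  simp only [sub_eq_add_neg, Matrix.fromBlocks_neg, Matrix.fromBlocks_add]

/-- in the commutative case,
`(G_{2k})² - G_{2k} = (∑_{i≤k} a_i a_i* - t(1-t))·I` for every `k`; hence if
`∑_{i=1}^n a_i a_i* = t - t²` (the sphere relation), `G_{2n}` is an idempotent,
and its matrix trace is the constant `2^{n-1}` (the `t`-terms cancel). -/
theorem classical_sphere_projector {R : Type*} [CommRing R] [StarRing R]
    (t : R) (hst : star t = t) (a : ℕ → R) (n : ℕ) :
    (∀ k : ℕ,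
      gMat t a k ^ 2 - gMat t a k
        = ((∑ i ∈ Finset.range k, a i * star (a i)) - t * (1 - t)) •
            (1 : Matrix (Fin (2 ^ k)) (Fin (2 ^ k)) R)) ∧
    ((∑ i ∈ Finset.range n, a i * star (a i) = t - t ^ 2) →
      gMat t a n ^ 2 = gMat t a n) ∧
    (∀ k : ℕ, 1 ≤ k → Matrix.trace (gMat t a k) = ((2 ^ (k - 1) : ℕ) : R)) := by
  have key : ∀ k : ℕ,
      gMat t a k ^ 2 - gMat t a k
        = ((∑ i ∈ Finset.range k, a i * star (a i)) - t * (1 - t)) •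
            (1 : Matrix (Fin (2 ^ k)) (Fin (2 ^ k)) R) := by
    intro k
    induction k with
    | zero =>
        show ((1 - t) • (1 : Matrix (Fin (2^0)) (Fin (2^0)) R)) ^ 2 - (1 - t) • 1 = _
        rw [smul_pow, one_pow, ← sub_smul]
        congr 1
        simp
        ring
    | succ k ih =>
        set d := (∑ i ∈ Finset.range (k+1), a i * star (a i)) - t * (1 - t) with hd
        have hdef : gMat t a (k+1) = Matrix.reindexAlgEquiv R R (powEquiv k)
            (Matrix.fromBlocks (gMat t a k) (star (a k) • 1) (a k • 1) (1 - gMat t a k)) := rfl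
        have hone : d • (1 : Matrix (Fin (2 ^ (k+1))) (Fin (2 ^ (k+1))) R)
            = Matrix.reindexAlgEquiv R R (powEquiv k) (d • 1) := by
          rw [_root_.map_smul, _root_.map_one]
        rw [hdef, ← map_pow, ← map_sub, hone]
        congr 1
        set G := gMat t a k with hG
        set c := (∑ i ∈ Finset.range k, a i * star (a i)) - t * (1 - t) with hc
        have ihG : G * G - G = c • 1 := by rw [← pow_two]; exact ih
        have hdc : c + a k * star (a k) = d := by
          rw [hd, hc, Finset.sum_range_succ]; ring
        have e1 : G * G + (star (a k) • 1) * (a k • (1 : Matrix (Fin (2^k)) (Fin (2^k)) R)) - G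
            = d • 1 := by
          rw [Matrix.smul_mul, Matrix.mul_smul, Matrix.one_mul, smul_smul,
            add_sub_right_comm, ihG, ← add_smul]
          rw [show star (a k) * a k = a k * star (a k) from mul_comm _ _, hdc]
        have e2 : G * (star (a k) • 1) + (star (a k) • 1) * (1 - G)
            - star (a k) • (1 : Matrix (Fin (2^k)) (Fin (2^k)) R) = 0 := by
          rw [Matrix.mul_smul, Matrix.mul_one, Matrix.smul_mul, Matrix.one_mul, smul_sub]
          abel
        have e3 : (a k • 1) * G + (1 - G) * (a k • 1)
            - a k • (1 : Matrix (Fin (2^k)) (Fin (2^k)) R) = 0 := by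
          rw [Matrix.mul_smul, Matrix.mul_one, Matrix.smul_mul, Matrix.one_mul, smul_sub]
          abel
        have e4 : (a k • 1) * (star (a k) • 1) + (1 - G) * (1 - G) - ((1 : Matrix (Fin (2^k)) (Fin (2^k)) R) - G)
            = d • 1 := by
          have h2 : (1 - G) * (1 - G) - (1 - G) = G * G - G := by noncomm_ring
          rw [Matrix.smul_mul, Matrix.mul_smul, Matrix.one_mul, smul_smul,
            add_sub_assoc, h2, ihG, ← add_smul,
            add_comm (a k * star (a k)) c, hdc]
        rw [pow_two, Matrix.fromBlocks_multiply, fromBlocks_sub', e1, e2, e3, e4]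
        rw [← Matrix.fromBlocks_one, Matrix.fromBlocks_smul, smul_zero]
  refine ⟨key, ?_, ?_⟩
  · intro h
    have := key n
    rw [h] at this
    have h0 : t - t ^ 2 - t * (1 - t) = 0 := by ring
    rw [h0, zero_smul] at this
    linear_combination (norm := abel) this
  · have T : ∀ k : ℕ, Matrix.trace (gMat t a (k+1)) = ((2 ^ k : ℕ) : R) := by
      intro k
      show Matrix.trace (Matrix.reindex (powEquiv k) (powEquiv k)
        (Matrix.fromBlocks (gMat t a k) (star (a k) • 1) (a k • 1) (1 - gMat t a k))) = _
      rw [Matrix.reindex_apply, trace_submatrix_equiv', trace_fromBlocks',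
        Matrix.trace_sub, Matrix.trace_one]
      push_cast [Fintype.card_fin]
      ring
    intro k hk
    obtain ⟨m, rfl⟩ := Nat.exists_eq_succ_of_ne_zero (by omega : k ≠ 0)
    simpa using T m
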